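/- Let n ≥ 3 be an odd integer and q > 0 a real number. The vector Σ_{i=1}^n q^i e_{{i}} ⊗ u_{n+i} ∈ S ⊗ V satisfies (Y_k ⊗ K_k^{−1/2} + K_k^{1/2} ⊗ Y_k)(Σ_{i=1}^n q^i e_{{i}} ⊗ u_{n+i}) = 0 for every k ∈ {1,…,n}, where in the first summand Y_k acts on S and K_k^{−1/2} acts on V, and in the second summand K_k^{1/2} acts on S and Y_k (= Y_k^V) acts on V; that is, it is a lowest weight vector defining an embedding of U₋ into U₊ ⊗ V over U_q(so_{2n}). -/
import Mathlib


open scoped TensorProduct Classical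

noncomputable section

/-- Subsets of `{1,…,n}`, the index set for the basis of the spinor space `S`. -/
abbrev SIdx (n : ℕ) : Type := {X : Finset ℕ // X ∈ (Finset.Icc 1 n).powerset}

/-- The spinor space `S`, with basis `(e_X)` indexed by subsets of `{1,…,n}`. -/
abbrev Sp (n : ℕ) : Type := SIdx n → ℂ

/-- The basis vector `e_X`. -/
def eB (n : ℕ) (X : SIdx n) : Sp n := Pi.single X 1

/-- `I₁(X) = Σ_{k∈X} k − |X|·n`. -/
def I1 (n : ℕ) (X : Finset ℕ) : ℤ := (∑ k ∈ X, (k : ℤ)) - X.card * n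

/-- `I_i(X) = I₁(X) + |{k ∈ X : k < i}| − (i−1)`. -/
def Ilow (n i : ℕ) (X : Finset ℕ) : ℤ :=
  I1 n X + ((X.filter (fun k => k < i)).card : ℤ) - ((i : ℤ) - 1)

/-- `I_{n+i}(X) = I₁(X) + |{k ∈ X : k < i}| − (n−1)`. -/
def Ihigh (n i : ℕ) (X : Finset ℕ) : ℤ :=
  I1 n X + ((X.filter (fun k => k < i)).card : ℤ) - ((n : ℤ) - 1)

def eraseIdx (n : ℕ) (X : SIdx n) (i : ℕ) : SIdx n :=
  ⟨(X : Finset ℕ).erase i,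
    Finset.mem_powerset.2 ((Finset.erase_subset _ _).trans (Finset.mem_powerset.1 X.2))⟩

def insertIdx (n : ℕ) (X : SIdx n) (i : ℕ) (h : i ∈ Finset.Icc 1 n) : SIdx n :=
  ⟨insert i (X : Finset ℕ),
    Finset.mem_powerset.2 (Finset.insert_subset h (Finset.mem_powerset.1 X.2))⟩

/-- The creation operator `a_i†`: `a_i† e_X = (−1)^{|{k ∈ X : k < i}|} e_{X∪{i}}` if `i ∉ X`,
and `a_i† e_X = 0` otherwise. -/
def adag (n i : ℕ) : Sp n →ₗ[ℂ] Sp n where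
  toFun f := fun X =>
    if i ∈ (X : Finset ℕ) then
      ((-1 : ℂ) ^ ((((X : Finset ℕ).erase i).filter (fun k => k < i)).card)) *
        f (eraseIdx n X i)
    else 0
  map_add' f g := by
    funext X; by_cases h : i ∈ (X : Finset ℕ) <;> simp [h] <;> ring
  map_smul' a f := by
    funext X; by_cases h : i ∈ (X : Finset ℕ) <;> simp [h] <;> ring

/-- The annihilation operator `a_i`: `a_i e_X = (−1)^{|{k ∈ X : k < i}|} e_{X∖{i}}` if `i ∈ X`,
and `a_i e_X = 0` otherwise. -/
def aop (n i : ℕ) : Sp n →ₗ[ℂ] Sp n where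
  toFun f := fun X =>
    if h : i ∈ Finset.Icc 1 n ∧ i ∉ (X : Finset ℕ) then
      ((-1 : ℂ) ^ (((insert i (X : Finset ℕ)).filter (fun k => k < i)).card)) *
        f (insertIdx n X i h.1)
    else 0
  map_add' f g := by
    funext X
    by_cases h : i ∈ Finset.Icc 1 n ∧ i ∉ (X : Finset ℕ)
    · simp only [dif_pos h, Pi.add_apply, mul_add]
    · simp only [dif_neg h, Pi.add_apply, add_zero]
  map_smul' a f := by
    funext X
    by_cases h : i ∈ Finset.Icc 1 n ∧ i ∉ (X : Finset ℕ)
    · simp only [dif_pos h, Pi.smul_apply, smul_eq_mul, RingHom.id_apply]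
      ring
    · simp only [dif_neg h, Pi.smul_apply, smul_eq_mul, RingHom.id_apply, mul_zero]

/-- The raising Chevalley generator: `X_i = −a_{i+1} a_i†` for `1 ≤ i ≤ n−1` and
`X_n = a_n† a_{n−1}†`. -/
def Xop (n i : ℕ) : Sp n →ₗ[ℂ] Sp n :=
  if i = n then (adag n n).comp (adag n (n - 1))
  else -((aop n (i + 1)).comp (adag n i))

/-- The lowering Chevalley generator: `Y_i = −a_i a_{i+1}†` for `1 ≤ i ≤ n−1` and
`Y_n = a_n a_{n−1}`. -/
def Yop (n i : ℕ) : Sp n →ₗ[ℂ] Sp n :=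
  if i = n then (aop n n).comp (aop n (n - 1))
  else -((aop n i).comp (adag n (i + 1)))

/-- `ẽ_i = Σ_{(X′,X″)∈Ω_i} σ_i(X′) e_{X′} ⊗ e_{X″}`, where `Ω_i` consists of pairs with
`X′ ∪ X″ = {1,…,n}`, `X′ ∩ X″ = {i}`, `|X′|` odd, and `σ_i(X) = (−1)^{I_i(X)}`. -/
def eTlow (n i : ℕ) : Sp n ⊗[ℂ] Sp n :=
  ∑ p ∈ Finset.univ.filter (fun p : SIdx n × SIdx n =>
      (p.1 : Finset ℕ) ∪ (p.2 : Finset ℕ) = Finset.Icc 1 n ∧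
      (p.1 : Finset ℕ) ∩ (p.2 : Finset ℕ) = {i} ∧ Odd (p.1 : Finset ℕ).card),
    ((-1 : ℂ) ^ (Ilow n i (p.1 : Finset ℕ))) • (eB n p.1 ⊗ₜ[ℂ] eB n p.2)

/-- `ẽ_{n+i} = (−1)^i Σ_{(X′,X″)∈Ω_{n+i}} σ_{n+i}(X′) e_{X′} ⊗ e_{X″}`, where `Ω_{n+i}`
consists of pairs of disjoint sets with `X′ ∪ X″ = {1,…,n} ∖ {i}` and `|X′|` odd, and
`σ_{n+i}(X) = (−1)^{I_{n+i}(X)}`. -/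
def eThigh (n i : ℕ) : Sp n ⊗[ℂ] Sp n :=
  ((-1 : ℂ) ^ i) •
    ∑ p ∈ Finset.univ.filter (fun p : SIdx n × SIdx n =>
        (p.1 : Finset ℕ) ∪ (p.2 : Finset ℕ) = (Finset.Icc 1 n) \ {i} ∧
        Disjoint (p.1 : Finset ℕ) (p.2 : Finset ℕ) ∧ Odd (p.1 : Finset ℕ).card),
      ((-1 : ℂ) ^ (Ihigh n i (p.1 : Finset ℕ))) • (eB n p.1 ⊗ₜ[ℂ] eB n p.2)

/-- The vector representation `V = ℂ^{2n}`; the coordinate `x` corresponds to the basis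
vector `u_{x+1}` (1-based indexing). -/
abbrev Vsp (n : ℕ) : Type := Fin (2 * n) → ℂ

/-- The basis vector `u_j` of `V` (1-based). -/
def uB (n j : ℕ) : Vsp n := fun x => if (x : ℕ) + 1 = j then 1 else 0

/-- The `l`-th coordinate functional on `V` (1-based). -/
def coordL (n l : ℕ) : Vsp n →ₗ[ℂ] ℂ where
  toFun f := ∑ x : Fin (2 * n), (if (x : ℕ) + 1 = l then 1 else 0) * f x
  map_add' f g := by simp [mul_add, Finset.sum_add_distrib]
  map_smul' a f := by
    simp only [Pi.smul_apply, smul_eq_mul, RingHom.id_apply, Finset.mul_sum]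
    exact Finset.sum_congr rfl fun x _ => by ring

/-- The matrix unit `E_{kl}`, acting by `E_{kl} u_m = δ_{lm} u_k`. -/
def matUnit (n k l : ℕ) : Vsp n →ₗ[ℂ] Vsp n := (coordL n l).smulRight (uB n k)

/-- The raising generator on `V`: `X_i = E_{i,i+1} − E_{n+i+1,n+i}` for `1 ≤ i ≤ n−1` and
`X_n = E_{n−1,2n} − E_{n,2n−1}`. -/
def XV (n i : ℕ) : Vsp n →ₗ[ℂ] Vsp n :=
  if i = n then matUnit n (n - 1) (2 * n) - matUnit n n (2 * n - 1)
  else matUnit n i (i + 1) - matUnit n (n + i + 1) (n + i)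

/-- The lowering generator on `V`: `Y_i = E_{i+1,i} − E_{n+i,n+i+1}` for `1 ≤ i ≤ n−1` and
`Y_n = E_{2n−1,n} − E_{2n,n−1}`. -/
def YV (n i : ℕ) : Vsp n →ₗ[ℂ] Vsp n :=
  if i = n then matUnit n (2 * n - 1) n - matUnit n (2 * n) (n - 1)
  else matUnit n (i + 1) i - matUnit n (n + i) (n + i + 1)

/-- `h_i(X)`: the eigenvalue of the coroot `H_i` on the weight vector `e_X`. -/
def hS (n i : ℕ) (X : Finset ℕ) : ℤ :=
  if i = n then (if n - 1 ∈ X then (1 : ℤ) else 0) + (if n ∈ X then (1 : ℤ) else 0) - 1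
  else (if i ∈ X then (1 : ℤ) else 0) - (if i + 1 ∈ X then (1 : ℤ) else 0)

/-- The operator `K_i^{±1/2}` on `S`, acting on `e_X` by `q^{±h_i(X)/2}`
(`ε = 1` gives `K_i^{1/2}`, `ε = −1` gives `K_i^{−1/2}`). -/
def Khalf (n : ℕ) (q : ℝ) (i : ℕ) (ε : ℤ) : Sp n →ₗ[ℂ] Sp n where
  toFun f := fun X => ((q ^ ((((ε * hS n i (X : Finset ℕ)) : ℤ) : ℝ) / 2) : ℝ) : ℂ) * f X
  map_add' f g := by funext X; simp [mul_add]
  map_smul' a f := by funext X; simp; ring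

/-- `h_i^V(j)`: the eigenvalue of the coroot `H_i` on the basis vector `u_j` of `V`. -/
def hV (n i j : ℕ) : ℤ :=
  if j ≤ n then
    (if i = n then (if j = n - 1 then (1 : ℤ) else 0) + (if j = n then (1 : ℤ) else 0)
     else (if j = i then (1 : ℤ) else 0) - (if j = i + 1 then (1 : ℤ) else 0))
  else
    -(if i = n then (if j - n = n - 1 then (1 : ℤ) else 0) + (if j - n = n then (1 : ℤ) else 0)
      else (if j - n = i then (1 : ℤ) else 0) - (if j - n = i + 1 then (1 : ℤ) else 0))

/-- The operator `K_i^{±1/2}` on `V`, acting on `u_j` by `q^{±h_i^V(j)/2}`. -/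
def KhalfV (n : ℕ) (q : ℝ) (i : ℕ) (ε : ℤ) : Vsp n →ₗ[ℂ] Vsp n where
  toFun f := fun x => ((q ^ ((((ε * hV n i ((x : ℕ) + 1)) : ℤ) : ℝ) / 2) : ℝ) : ℂ) * f x
  map_add' f g := by funext x; simp [mul_add]
  map_smul' a f := by funext x; simp; ring

/-- The vector `Σ_{i=1}^n q^i e_{{i}} ⊗ u_{n+i} ∈ S ⊗ V`. -/
def lwSVq (n : ℕ) (q : ℝ) : Sp n ⊗[ℂ] Vsp n :=
  ∑ i ∈ (Finset.Icc 1 n).attach,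
    ((q : ℂ) ^ (i : ℕ)) •
      (eB n ⟨{(i : ℕ)}, Finset.mem_powerset.2 (Finset.singleton_subset_iff.2 i.2)⟩
        ⊗ₜ[ℂ] uB n (n + (i : ℕ)))

lemma eB_apply {n : ℕ} (X Y : SIdx n) : eB n X Y = if Y = X then 1 else 0 := by
  simp [eB, Pi.single_apply]

lemma adag_eB_not_mem (n j : ℕ) (hj : j ∈ Finset.Icc 1 n) (Y : SIdx n)
    (hjY : j ∉ (Y : Finset ℕ)) :
    adag n j (eB n Y) =
      ((-1 : ℂ) ^ (((Y : Finset ℕ).filter (fun k => k < j)).card)) • eB n (insertIdx n Y j hj) := by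
  funext X
  simp only [adag, LinearMap.coe_mk, AddHom.coe_mk, Pi.smul_apply, smul_eq_mul, eB_apply]
  by_cases h : j ∈ (X : Finset ℕ)
  · rw [if_pos h]
    by_cases hXY : X = insertIdx n Y j hj
    · subst hXY
      have hE : eraseIdx n (insertIdx n Y j hj) j = Y := by
        apply Subtype.ext
        simp only [eraseIdx, insertIdx, Finset.erase_insert hjY]
      have hfil : (((insertIdx n Y j hj : SIdx n) : Finset ℕ).erase j) = (Y : Finset ℕ) := by
        simp only [insertIdx, Finset.erase_insert hjY]
      simp [hE, hfil]
    · have h1 : eraseIdx n X j ≠ Y := by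
        intro hE
        apply hXY
        apply Subtype.ext
        have : (X : Finset ℕ).erase j = (Y : Finset ℕ) := congrArg Subtype.val hE
        simp only [insertIdx, ← this, Finset.insert_erase h]
      rw [if_neg h1, if_neg hXY, mul_zero, mul_zero]
  · rw [if_neg h, if_neg, mul_zero]
    intro hXY
    apply h
    rw [hXY]
    exact Finset.mem_insert_self j _

lemma adag_eB_mem (n j : ℕ) (Y : SIdx n) (hjY : j ∈ (Y : Finset ℕ)) :
    adag n j (eB n Y) = 0 := by
  funext X
  simp only [adag, LinearMap.coe_mk, AddHom.coe_mk, eB_apply, Pi.zero_apply]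
  by_cases h : j ∈ (X : Finset ℕ)
  · rw [if_pos h, if_neg, mul_zero]
    intro hE
    have : (X : Finset ℕ).erase j = (Y : Finset ℕ) := congrArg Subtype.val hE
    exact Finset.notMem_erase j (X : Finset ℕ) (this ▸ hjY)
  · rw [if_neg h]

lemma aop_eB_mem (n j : ℕ) (Y : SIdx n) (hjY : j ∈ (Y : Finset ℕ)) :
    aop n j (eB n Y) =
      ((-1 : ℂ) ^ (((Y : Finset ℕ).filter (fun k => k < j)).card)) • eB n (eraseIdx n Y j) := by
  have hjIcc : j ∈ Finset.Icc 1 n := Finset.mem_powerset.1 Y.2 hjY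
  funext X
  simp only [aop, LinearMap.coe_mk, AddHom.coe_mk, Pi.smul_apply, smul_eq_mul, eB_apply]
  by_cases h : j ∈ Finset.Icc 1 n ∧ j ∉ (X : Finset ℕ)
  · rw [dif_pos h]
    by_cases hXY : X = eraseIdx n Y j
    · subst hXY
      have hI : insertIdx n (eraseIdx n Y j) j h.1 = Y := by
        apply Subtype.ext
        simp only [insertIdx, eraseIdx, Finset.insert_erase hjY]
      have hfil : insert j ((eraseIdx n Y j : SIdx n) : Finset ℕ) = (Y : Finset ℕ) := by
        simp only [eraseIdx, Finset.insert_erase hjY]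
      simp [hI, hfil]
    · have h1 : insertIdx n X j h.1 ≠ Y := by
        intro hE
        apply hXY
        apply Subtype.ext
        have h2 : insert j (X : Finset ℕ) = (Y : Finset ℕ) := congrArg Subtype.val hE
        simp only [eraseIdx, ← h2, Finset.erase_insert h.2]
      rw [if_neg h1, if_neg hXY, mul_zero, mul_zero]
  · rw [dif_neg h, if_neg, mul_zero]
    intro hXY
    have hjX : j ∈ (X : Finset ℕ) := by
      by_contra hjX
      exact h ⟨hjIcc, hjX⟩
    rw [hXY] at hjX
    exact Finset.notMem_erase j (Y : Finset ℕ) hjX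

lemma aop_eB_not_mem (n j : ℕ) (Y : SIdx n) (hjY : j ∉ (Y : Finset ℕ)) :
    aop n j (eB n Y) = 0 := by
  funext X
  simp only [aop, LinearMap.coe_mk, AddHom.coe_mk, eB_apply, Pi.zero_apply]
  by_cases h : j ∈ Finset.Icc 1 n ∧ j ∉ (X : Finset ℕ)
  · rw [dif_pos h, if_neg, mul_zero]
    intro hE
    have : insert j (X : Finset ℕ) = (Y : Finset ℕ) := congrArg Subtype.val hE
    exact hjY (this ▸ Finset.mem_insert_self j _)
  · rw [dif_neg h]

lemma Yop_single (n k i : ℕ) (hk1 : 1 ≤ k) (hkn : k < n)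
    (hi : ({i} : Finset ℕ) ∈ (Finset.Icc 1 n).powerset)
    (hk' : ({k + 1} : Finset ℕ) ∈ (Finset.Icc 1 n).powerset) :
    Yop n k (eB n ⟨{i}, hi⟩) = if i = k then eB n ⟨{k + 1}, hk'⟩ else 0 := by
  rw [Yop, if_neg (Nat.ne_of_lt hkn)]
  have hk1Icc : k + 1 ∈ Finset.Icc 1 n := Finset.mem_Icc.2 ⟨by omega, by omega⟩
  by_cases hik1 : i = k + 1
  · subst hik1
    rw [if_neg (by omega)]
    have h0 : adag n (k + 1) (eB n ⟨{k + 1}, hi⟩) = 0 :=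
      adag_eB_mem n (k + 1) _ (Finset.mem_singleton_self _)
    simp [h0]
  · have hnotmem : k + 1 ∉ (({i} : Finset ℕ)) := by
      simp [Ne.symm hik1]
    have h1 := adag_eB_not_mem n (k + 1) hk1Icc ⟨{i}, hi⟩ hnotmem
    simp only [LinearMap.neg_apply, LinearMap.comp_apply, h1, map_smul]
    by_cases hik : i = k
    · subst hik
      rw [if_pos rfl]
      have hmem : i ∈ ((insertIdx n ⟨{i}, hi⟩ (i + 1) hk1Icc : SIdx n) : Finset ℕ) := by
        simp [insertIdx]
      have h2 := aop_eB_mem n i _ hmem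
      rw [h2]
      have hset : ((insertIdx n (⟨{i}, hi⟩ : SIdx n) (i + 1) hk1Icc : SIdx n) : Finset ℕ)
          = insert (i + 1) {i} := rfl
      have hE : eraseIdx n (insertIdx n (⟨{i}, hi⟩ : SIdx n) (i + 1) hk1Icc) i
          = ⟨{i + 1}, hk'⟩ := by
        apply Subtype.ext
        simp only [eraseIdx, hset]
        rw [Finset.erase_insert_of_ne (by omega), Finset.erase_singleton]
        rfl
      rw [hE]
      have hc1 : ((({i} : Finset ℕ)).filter (fun j => j < i + 1)).card = 1 := by
        rw [Finset.filter_singleton, if_pos (by omega)]; rfl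
      have hc2 : ((insert (i + 1) ({i} : Finset ℕ)).filter (fun j => j < i)).card = 0 := by
        rw [Finset.filter_insert, if_neg (by omega), Finset.filter_singleton,
          if_neg (by omega)]; rfl
      rw [hset, hc1, hc2]
      simp [smul_smul]
    · rw [if_neg hik]
      have hnotmem2 : k ∉ ((insertIdx n (⟨{i}, hi⟩ : SIdx n) (k + 1) hk1Icc : SIdx n) : Finset ℕ) := by
        simp [insertIdx]
        omega
      have h2 := aop_eB_not_mem n k _ hnotmem2
      simp [h2]

lemma Yop_n_single (n i : ℕ) (hn : 3 ≤ n)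
    (hi : ({i} : Finset ℕ) ∈ (Finset.Icc 1 n).powerset) :
    Yop n n (eB n ⟨{i}, hi⟩) = 0 := by
  rw [Yop, if_pos rfl]
  by_cases him : n - 1 ∈ ({i} : Finset ℕ)
  · have h1 := aop_eB_mem n (n - 1) ⟨{i}, hi⟩ him
    have hi1 : i = n - 1 := (Finset.mem_singleton.1 him).symm
    have hE : ((eraseIdx n (⟨{i}, hi⟩ : SIdx n) (n - 1) : SIdx n) : Finset ℕ) = ∅ := by
      simp [eraseIdx, hi1, Finset.erase_singleton]
    have h2 : aop n n (eB n (eraseIdx n (⟨{i}, hi⟩ : SIdx n) (n - 1))) = 0 := by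
      apply aop_eB_not_mem
      rw [hE]
      exact Finset.notMem_empty n
    simp [LinearMap.comp_apply, h1, h2]
  · have h1 := aop_eB_not_mem n (n - 1) ⟨{i}, hi⟩ him
    simp [LinearMap.comp_apply, h1]

lemma Khalf_eB (n : ℕ) (q : ℝ) (k : ℕ) (ε : ℤ) (Y : SIdx n) :
    Khalf n q k ε (eB n Y) =
      (((q ^ ((((ε * hS n k (Y : Finset ℕ)) : ℤ) : ℝ) / 2) : ℝ) : ℂ)) • eB n Y := by
  funext X
  simp only [Khalf, LinearMap.coe_mk, AddHom.coe_mk, Pi.smul_apply, smul_eq_mul, eB_apply]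
  by_cases h : X = Y
  · subst h; simp
  · simp [h]

lemma KhalfV_uB (n : ℕ) (q : ℝ) (k : ℕ) (ε : ℤ) (j : ℕ) :
    KhalfV n q k ε (uB n j) =
      (((q ^ ((((ε * hV n k j) : ℤ) : ℝ) / 2) : ℝ) : ℂ)) • uB n j := by
  funext x
  simp only [KhalfV, LinearMap.coe_mk, AddHom.coe_mk, Pi.smul_apply, smul_eq_mul, uB]
  by_cases h : (x : ℕ) + 1 = j
  · rw [h, if_pos rfl, mul_one]
  · rw [if_neg h, mul_zero, mul_zero]

lemma coordL_uB (n l j : ℕ) :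
    coordL n l (uB n j) = if l = j ∧ 1 ≤ j ∧ j ≤ 2 * n then 1 else 0 := by
  simp only [coordL, uB, LinearMap.coe_mk, AddHom.coe_mk]
  by_cases h : l = j ∧ 1 ≤ j ∧ j ≤ 2 * n
  · rw [if_pos h]
    obtain ⟨rfl, h1, h2⟩ := h
    rw [Finset.sum_eq_single (⟨l - 1, by omega⟩ : Fin (2 * n))]
    · have : ((⟨l - 1, by omega⟩ : Fin (2 * n)) : ℕ) + 1 = l := by simp; omega
      rw [this, if_pos rfl, one_mul]
    · intro b _ hb
      have hb' : ¬((b : ℕ) + 1 = l) := by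
        intro hb'
        exact hb (Fin.ext (by simp; omega))
      simp [hb']
    · simp
  · rw [if_neg h]
    apply Finset.sum_eq_zero
    intro x _
    by_cases hx : (x : ℕ) + 1 = l
    · have hx' : ¬((x : ℕ) + 1 = j) := by
        intro hx'
        exact h ⟨by omega, by omega, by omega⟩
      simp [hx']
    · simp [hx]

lemma matUnit_uB (n a l j : ℕ) :
    matUnit n a l (uB n j) = (if l = j ∧ 1 ≤ j ∧ j ≤ 2 * n then (1 : ℂ) else 0) • uB n a := by
  simp only [matUnit, LinearMap.smulRight_apply, coordL_uB]

lemma YV_low (n k i : ℕ) (hk1 : 1 ≤ k) (hkn : k < n) (hi1 : 1 ≤ i) (hin : i ≤ n) :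
    YV n k (uB n (n + i)) = if i = k + 1 then -(uB n (n + k)) else 0 := by
  rw [YV, if_neg (Nat.ne_of_lt hkn)]
  simp only [LinearMap.sub_apply, matUnit_uB]
  have h1 : ¬(k = n + i ∧ 1 ≤ n + i ∧ n + i ≤ 2 * n) := by omega
  rw [if_neg h1, zero_smul, zero_sub]
  by_cases h : i = k + 1
  · rw [if_pos (by omega), if_pos h, one_smul]
  · rw [if_neg (by omega), if_neg h, zero_smul, neg_zero]

lemma YV_n (n i : ℕ) (hn : 3 ≤ n) (hi1 : 1 ≤ i) (hin : i ≤ n) :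
    YV n n (uB n (n + i)) = 0 := by
  rw [YV, if_pos rfl]
  simp only [LinearMap.sub_apply, matUnit_uB]
  rw [if_neg (by omega), if_neg (by omega), zero_smul, zero_smul, sub_zero]

/-- `Σ_{i=1}^n q^i e_{{i}} ⊗ u_{n+i}` is annihilated by `Y_k ⊗ K_k^{−1/2} + K_k^{1/2} ⊗ Y_k`
for every `k ∈ {1,…,n}`: it is a lowest weight vector defining an embedding of `U₋` into
`U₊ ⊗ V` over `U_q(so_{2n})`. -/
theorem stmt14 (n : ℕ) (hn : 3 ≤ n) (hodd : Odd n) (q : ℝ) (hq : 0 < q)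
    (k : ℕ) (hk : k ∈ Finset.Icc 1 n) :
    (TensorProduct.map (Yop n k) (KhalfV n q k (-1))
        + TensorProduct.map (Khalf n q k 1) (YV n k)) (lwSVq n q) = 0 := by
  have hk1 : 1 ≤ k := (Finset.mem_Icc.1 hk).1
  have hkn : k ≤ n := (Finset.mem_Icc.1 hk).2
  rw [lwSVq, map_sum]
  rcases eq_or_lt_of_le hkn with hke | hklt
  · -- case k = n
    subst hke
    apply Finset.sum_eq_zero
    intro i _
    rw [map_smul, LinearMap.add_apply, TensorProduct.map_tmul, TensorProduct.map_tmul,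
      Yop_n_single k (i : ℕ) hn _, YV_n k (i : ℕ) hn (Finset.mem_Icc.1 i.2).1 (Finset.mem_Icc.1 i.2).2,
      TensorProduct.zero_tmul, TensorProduct.tmul_zero, add_zero, smul_zero]
  · -- case k < n
    have hk1n : k + 1 ∈ Finset.Icc 1 n := Finset.mem_Icc.2 ⟨by omega, by omega⟩
    have hkpow : ({k + 1} : Finset ℕ) ∈ (Finset.Icc 1 n).powerset :=
      Finset.mem_powerset.2 (Finset.singleton_subset_iff.2 hk1n)
    have hne : ¬(k = k + 1) := by omega
    have key : ∀ i ∈ (Finset.Icc 1 n).attach,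
        (TensorProduct.map (Yop n k) (KhalfV n q k (-1))
            + TensorProduct.map (Khalf n q k 1) (YV n k))
          (((q : ℂ) ^ (i : ℕ)) •
            (eB n ⟨{(i : ℕ)}, Finset.mem_powerset.2 (Finset.singleton_subset_iff.2 i.2)⟩
              ⊗ₜ[ℂ] uB n (n + (i : ℕ))))
        = (if (i : ℕ) = k then
            ((q : ℂ) ^ k * (((q ^ ((((-1 : ℤ) * hV n k (n + k) : ℤ) : ℝ) / 2) : ℝ) : ℂ))) •
              (eB n ⟨{k + 1}, hkpow⟩ ⊗ₜ[ℂ] uB n (n + k)) else 0)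
          + (if (i : ℕ) = k + 1 then
            (-((q : ℂ) ^ (k + 1) *
                (((q ^ ((((1 : ℤ) * hS n k ({k + 1} : Finset ℕ) : ℤ) : ℝ) / 2) : ℝ) : ℂ)))) •
              (eB n ⟨{k + 1}, hkpow⟩ ⊗ₜ[ℂ] uB n (n + k)) else 0) := by
      intro i _
      have hi1 : 1 ≤ (i : ℕ) := (Finset.mem_Icc.1 i.2).1
      have hi2 : (i : ℕ) ≤ n := (Finset.mem_Icc.1 i.2).2
      rw [map_smul, LinearMap.add_apply, TensorProduct.map_tmul, TensorProduct.map_tmul,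
        Yop_single n k (i : ℕ) hk1 hklt _ hkpow, KhalfV_uB, Khalf_eB,
        YV_low n k (i : ℕ) hk1 hklt hi1 hi2]
      by_cases hik : (i : ℕ) = k
      · rw [if_pos hik, if_pos hik, if_neg (by omega : ¬((i : ℕ) = k + 1)),
          if_neg (by omega : ¬((i : ℕ) = k + 1)), TensorProduct.tmul_zero, add_zero, add_zero,
          hik, TensorProduct.tmul_smul, smul_smul]
      · rw [if_neg hik, if_neg hik]
        by_cases hik1 : (i : ℕ) = k + 1
        · rw [if_pos hik1, if_pos hik1, TensorProduct.zero_tmul, zero_add, zero_add]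
          have hsub : (⟨{(i : ℕ)},
              Finset.mem_powerset.2 (Finset.singleton_subset_iff.2 i.2)⟩ : SIdx n)
              = ⟨{k + 1}, hkpow⟩ := Subtype.ext (by simp only [hik1])
          rw [hsub, hik1, TensorProduct.tmul_neg, ← TensorProduct.smul_tmul', smul_neg,
            smul_smul, ← neg_smul]
        · rw [if_neg hik1, if_neg hik1, TensorProduct.zero_tmul, TensorProduct.tmul_zero]
          simp
    rw [Finset.sum_congr rfl key, Finset.sum_add_distrib,
      Finset.sum_attach (Finset.Icc 1 n) (fun j => if j = k then
        ((q : ℂ) ^ k * (((q ^ ((((-1 : ℤ) * hV n k (n + k) : ℤ) : ℝ) / 2) : ℝ) : ℂ))) •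
          (eB n ⟨{k + 1}, hkpow⟩ ⊗ₜ[ℂ] uB n (n + k)) else 0),
      Finset.sum_attach (Finset.Icc 1 n) (fun j => if j = k + 1 then
        (-((q : ℂ) ^ (k + 1) *
            (((q ^ ((((1 : ℤ) * hS n k ({k + 1} : Finset ℕ) : ℤ) : ℝ) / 2) : ℝ) : ℂ)))) •
          (eB n ⟨{k + 1}, hkpow⟩ ⊗ₜ[ℂ] uB n (n + k)) else 0),
      Finset.sum_ite_eq' (Finset.Icc 1 n) k, Finset.sum_ite_eq' (Finset.Icc 1 n) (k + 1),
      if_pos hk, if_pos hk1n, ← add_smul]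
    convert zero_smul ℂ _
    have hVval : hV n k (n + k) = -1 := by
      rw [hV, if_neg (by omega), if_neg (Nat.ne_of_lt hklt),
        if_pos (by omega : n + k - n = k), if_neg (by omega : ¬(n + k - n = k + 1))]
      ring
    have hSval : hS n k ({k + 1} : Finset ℕ) = -1 := by
      rw [hS, if_neg (Nat.ne_of_lt hklt), if_neg (by simp only [Finset.mem_singleton]; omega), if_pos (Finset.mem_singleton_self _)]
      ring
    rw [hVval, hSval]
    norm_num
    have hr : (q : ℝ) ^ (k : ℕ) * q ^ ((1 : ℝ) / 2) = q ^ (k + 1) * q ^ (-((1 : ℝ) / 2)) := by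
      rw [pow_succ, mul_assoc]
      congr 1
      have h2 : q * q ^ (-((1 : ℝ) / 2)) = q ^ (1 + (-((1 : ℝ) / 2))) := by
        rw [Real.rpow_add hq, Real.rpow_one]
      rw [h2]
      norm_num
    have hr0 : (q : ℝ) ^ (k : ℕ) * q ^ ((1 : ℝ) / 2) + -(q ^ (k + 1) * q ^ (-((1 : ℝ) / 2))) = 0 := by
      rw [hr]; ring
    exact_mod_cast hr0


end
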